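/- The connectivity of the construction graph G of Theorem 2 with parameter m is exactly m. -/

import Mathlib

open SimpleGraph

/-- The deletion of a vertex set `S` leaves a connected graph. -/
def DeleteConnected {V : Type*} (G : SimpleGraph V) (S : Set V) : Prop :=
  ((⊤ : G.Subgraph).deleteVerts S).coe.Connected

/-- `G` is `k`-connected: more than `k` vertices, and removing fewer than `k`
vertices leaves a connected graph. -/
def IsKConnected {V : Type*} (G : SimpleGraph V) (k : ℕ) : Prop :=
  k < Nat.card V ∧ ∀ S : Set V, S.ncard < k → DeleteConnected G S

/-- The vertex connectivity `κ(G)`. -/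
noncomputable def kappa {V : Type*} (G : SimpleGraph V) : ℕ := sSup {k | IsKConnected G k}

/-- The independence number `α(G)`. -/
noncomputable def indepNum {V : Type*} (G : SimpleGraph V) : ℕ :=
  sSup {n | ∃ s : Set V, (∀ a ∈ s, ∀ b ∈ s, ¬ G.Adj a b) ∧ s.ncard = n}

/-- The branch vertices of a graph: the vertices of degree more than `2`. -/
def branchVerts {V : Type*} (T : SimpleGraph V) : Set V := {v | 2 < (T.neighborSet v).ncard}

/-- `s(G)`: the minimum number of branch vertices over all spanning trees of `G`. -/
noncomputable def sBranch {V : Type*} (G : SimpleGraph V) : ℕ :=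
  sInf {n | ∃ T : SimpleGraph V, T ≤ G ∧ T.IsTree ∧ (branchVerts T).ncard = n}

/-- `T` is a spanning generalized caterpillar of `G`: a spanning tree all of whose
branch vertices lie on a single path. -/
def IsSGCof {V : Type*} (G T : SimpleGraph V) : Prop :=
  T ≤ G ∧ T.IsTree ∧
    ∃ (u v : V) (p : T.Walk u v), p.IsPath ∧ ∀ w ∈ branchVerts T, w ∈ p.support

/-- `G` has a spanning generalized caterpillar. -/
def HasSGC {V : Type*} (G : SimpleGraph V) : Prop := ∃ T, IsSGCof G T

/-- The vertices of `G` can be covered by `n` pairwise vertex-disjoint paths. -/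
def HasPathCover {V : Type*} (G : SimpleGraph V) (n : ℕ) : Prop :=
  ∃ (u v : Fin n → V) (p : ∀ i, G.Walk (u i) (v i)),
    (∀ i, (p i).IsPath) ∧
    (∀ i j, i ≠ j → ∀ x, x ∈ (p i).support → x ∉ (p j).support) ∧
    (∀ x, ∃ i, x ∈ (p i).support)

/-- The construction of Theorem 2: an independent set `S` of size `m` together with
`m + 2` copies of `K_{2m+1,m}` with parts `B i` (size `2m+1`) and `A i` (size `m`);
the chosen vertices `t i j` are the first `m` vertices of `B i`, each joined to all of `S`. -/
def ConstructionGraph (m : ℕ) :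
    SimpleGraph (Fin m ⊕ (Fin (m + 2) × (Fin (2 * m + 1) ⊕ Fin m))) :=
  SimpleGraph.fromRel (fun x y =>
    match x, y with
    | Sum.inr ⟨i, Sum.inl _⟩, Sum.inr ⟨i', Sum.inr _⟩ => i = i'
    | Sum.inl _, Sum.inr ⟨_, Sum.inl b⟩ => (b : ℕ) < m
    | _, _ => False)

/-!
Deleting fewer than `m` vertices spares some `s ∈ S` and, in every copy, one of its `m` chosen
vertices `t` and one vertex of its part `A`. Every surviving vertex of a copy is adjacent to that
vertex of `A` or to `t`, and `t` is adjacent to `s`, so what remains is connected. Deleting `S`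
itself separates the `m + 2` copies, since no edge joins two of them.
-/

lemma Set.exists_apply_notMem_of_ncard_lt {α ι : Type*} [Finite α] {T : Set α} {f : ι → α}
    (hf : Function.Injective f) (hT : T.ncard < Nat.card ι) : ∃ i, f i ∉ T := by
  obtain ⟨_, ⟨i, rfl⟩, hi⟩ :=
    Set.exists_mem_notMem_of_ncard_lt_ncard (s := T) (t := Set.range f)
      (by rwa [Set.ncard_range_of_injective hf])
  exact ⟨i, hi⟩

namespace SimpleGraph

variable {V : Type*} {G : SimpleGraph V}

lemma deleteConnected_iff {S : Set V} : DeleteConnected G S ↔ (G.induce Sᶜ).Connected := by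
  have : (⊤ : G.Subgraph).deleteVerts S = (⊤ : G.Subgraph).induce Sᶜ := by
    ext <;> simp
  rw [DeleteConnected, connected_induce_iff, this, Subgraph.connected_iff']

lemma Adj.induce_reachable {s : Set V} {x y : V} (h : G.Adj x y) (hx : x ∈ s) (hy : y ∈ s) :
    (G.induce s).Reachable ⟨x, hx⟩ ⟨y, hy⟩ :=
  Adj.reachable (induce_adj.2 h)

lemma not_connected_induce_of_adj_imp_eq {β : Type*} {s : Set V} (f : V → β)
    (hf : ∀ x ∈ s, ∀ y ∈ s, G.Adj x y → f x = f y) {x y : V} (hx : x ∈ s) (hy : y ∈ s)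
    (hxy : f x ≠ f y) : ¬(G.induce s).Connected := by
  intro hconn
  suffices ∀ z : s, (G.induce s).Reachable ⟨x, hx⟩ z → f x = f z from
    hxy (this ⟨y, hy⟩ (hconn.preconnected _ _))
  intro z hz
  rw [reachable_iff_reflTransGen] at hz
  induction hz with
  | refl => rfl
  | tail _ hadj ih => exact ih.trans (hf _ (Subtype.prop _) _ (Subtype.prop _) hadj)

lemma IsKConnected.mono {j k : ℕ} (h : IsKConnected G k) (hjk : j ≤ k) : IsKConnected G j :=
  ⟨hjk.trans_lt h.1, fun S hS => h.2 S (hS.trans_le hjk)⟩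

lemma kappa_eq_of_isKConnected {k : ℕ} (h : IsKConnected G k) {S : Set V} (hS : S.ncard ≤ k)
    (hdisc : ¬DeleteConnected G S) : kappa G = k := by
  have hbdd : ∀ j ∈ {j | IsKConnected G j}, j ≤ k := fun j hj => by
    by_contra! hkj
    exact hdisc ((hj.mono hkj).2 S (Nat.lt_succ_of_le hS))
  exact le_antisymm (csSup_le ⟨k, h⟩ hbdd) (le_csSup ⟨k, hbdd⟩ h)

end SimpleGraph

namespace ConstructionGraph

open SimpleGraph

abbrev Vertex (m : ℕ) : Type := Fin m ⊕ (Fin (m + 2) × (Fin (2 * m + 1) ⊕ Fin m))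

variable {m : ℕ}

lemma adj_inl_inr_inl {s : Fin m} {i : Fin (m + 2)} {b : Fin (2 * m + 1)} :
    (ConstructionGraph m).Adj (.inl s) (.inr (i, .inl b)) ↔ (b : ℕ) < m := by
  simp [ConstructionGraph]

lemma adj_inr_inl_inr_inr {i i' : Fin (m + 2)} {b : Fin (2 * m + 1)} {a : Fin m} :
    (ConstructionGraph m).Adj (.inr (i, .inl b)) (.inr (i', .inr a)) ↔ i = i' := by
  simp [ConstructionGraph]

lemma eq_of_adj_inr_inr {i i' : Fin (m + 2)} {x x' : Fin (2 * m + 1) ⊕ Fin m}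
    (h : (ConstructionGraph m).Adj (.inr (i, x)) (.inr (i', x'))) : i = i' := by
  rw [ConstructionGraph, fromRel_adj] at h
  rcases h with ⟨-, h | h⟩ <;> rcases x with b | a <;> rcases x' with b' | a' <;>
    first | exact h | exact h.symm | exact h.elim

lemma deleteConnected_of_ncard_lt {T : Set (Vertex m)} (hT : T.ncard < m) :
    DeleteConnected (ConstructionGraph m) T := by
  have hT' : T.ncard < Nat.card (Fin m) := by rwa [Nat.card_fin]
  obtain ⟨s₀, hs₀⟩ := Set.exists_apply_notMem_of_ncard_lt (f := (Sum.inl : _ → Vertex m))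
    Sum.inl_injective hT'
  have chosen_survives : ∀ i, ∃ b : Fin (2 * m + 1), (b : ℕ) < m ∧ (.inr (i, .inl b) : Vertex m) ∉ T := by
    intro i
    obtain ⟨j, hj⟩ := Set.exists_apply_notMem_of_ncard_lt
      (f := fun j : Fin m => (.inr (i, .inl (Fin.castLE (by omega) j)) : Vertex m))
      (fun j j' h => by simpa [Fin.ext_iff] using h) hT'
    exact ⟨_, j.2, hj⟩
  choose t ht htT using chosen_survives
  have part_A_survives : ∀ i, ∃ a : Fin m, (.inr (i, .inr a) : Vertex m) ∉ T := fun i =>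
    Set.exists_apply_notMem_of_ncard_lt (f := fun a : Fin m => (.inr (i, .inr a) : Vertex m))
      (fun a a' h => by simpa using h) hT'
  choose a haT using part_A_survives
  rw [deleteConnected_iff, connected_iff_exists_forall_reachable]
  refine ⟨⟨.inl s₀, hs₀⟩, ?_⟩
  have reach_t : ∀ i, ((ConstructionGraph m).induce Tᶜ).Reachable ⟨.inl s₀, hs₀⟩ ⟨_, htT i⟩ :=
    fun i => (adj_inl_inr_inl.2 (ht i)).induce_reachable _ _
  have reach_A : ∀ i a' (h : (.inr (i, .inr a') : Vertex m) ∉ T),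
      ((ConstructionGraph m).induce Tᶜ).Reachable ⟨.inl s₀, hs₀⟩ ⟨_, h⟩ :=
    fun i a' h => (reach_t i).trans ((adj_inr_inl_inr_inr.2 rfl).induce_reachable _ _)
  rintro ⟨s | ⟨i, b | a'⟩, hx⟩
  · exact (reach_t 0).trans ((adj_inl_inr_inl.2 (ht 0)).symm.induce_reachable _ _)
  · exact (reach_A i _ (haT i)).trans ((adj_inr_inl_inr_inr.2 rfl).symm.induce_reachable _ _)
  · exact reach_A i a' hx

lemma not_deleteConnected_range_inl :
    ¬DeleteConnected (ConstructionGraph m) (Set.range (Sum.inl : _ → Vertex m)) := by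
  rw [deleteConnected_iff]
  refine not_connected_induce_of_adj_imp_eq (Sum.elim (fun _ => (0 : Fin (m + 2))) Prod.fst) ?_
    (x := .inr (0, .inl 0)) (y := .inr (1, .inl 0)) (by simp) (by simp) (by simp)
  rintro (s | ⟨i, x⟩) hx (s' | ⟨i', x'⟩) hx' hadj
  · exact (hx ⟨s, rfl⟩).elim
  · exact (hx ⟨s, rfl⟩).elim
  · exact (hx' ⟨s', rfl⟩).elim
  · exact eq_of_adj_inr_inr hadj

lemma isKConnected : IsKConnected (ConstructionGraph m) m := by
  refine ⟨?_, fun T hT => deleteConnected_of_ncard_lt hT⟩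
  simp only [Nat.card_eq_fintype_card, Fintype.card_sum, Fintype.card_prod, Fintype.card_fin]
  nlinarith

end ConstructionGraph

theorem stmt17_general (m : ℕ) : kappa (ConstructionGraph m) = m :=
  SimpleGraph.kappa_eq_of_isKConnected ConstructionGraph.isKConnected
    (by rw [Set.ncard_range_of_injective Sum.inl_injective, Nat.card_fin])
    ConstructionGraph.not_deleteConnected_range_inl

/-- The connectivity of the construction graph is exactly `m`. -/
theorem stmt17 (m : ℕ) (hm : 1 ≤ m) : kappa (ConstructionGraph m) = m :=
  stmt17_general m
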